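/- Let g₁ be a factor over a finite variable set W₁ and g₂ a factor over a finite variable set W₂, and let Z be any set of variables. Then summing out all variables not in Z from the product g₁ · g₂ can be decomposed by first summing out of each factor independently all of its variables not shared with the other factor or with Z: ∑_{(W₁∪W₂)\Z} (g₁ · g₂) = ∑_{((W₁∩(W₂∪Z)) ∪ (W₂∩(W₁∪Z)))\Z} ((∑_{W₁\(W₂∪Z)} g₁) · (∑_{W₂\(W₁∪Z)} g₂)). -/

import Mathlib

/-!
The summed-out variables `(W₁ ∪ W₂) \ Z` split into three disjoint pieces: the shared part
`((W₁ ∩ (W₂ ∪ Z)) ∪ (W₂ ∩ (W₁ ∪ Z))) \ Z` and the private parts `W₁ \ (W₂ ∪ Z)` and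
`W₂ \ (W₁ ∪ Z)`. A sum over instantiations of a disjoint union is an iterated sum, and since
`g₁` does not see the variables private to `W₂` and vice versa, the inner double sum over the
private parts is the product of the two partial sums.
-/

/-- An instantiation of the variables in `S`, where variable `i` has value set `V i`. -/
abbrev Inst {ι : Type*} (V : ι → Type*) (S : Finset ι) : Type _ :=
  ∀ i : S, V i

/-- Restrict an instantiation of `T` to a subset `S ⊆ T`. -/
def Inst.restrict {ι : Type*} {V : ι → Type*} {S T : Finset ι} (h : S ⊆ T)
    (z : Inst V T) : Inst V S :=
  fun i => z ⟨i, h i.2⟩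

/-- Transport an instantiation along an equality of variable sets. -/
def Inst.cast {ι : Type*} {V : ι → Type*} {S T : Finset ι} (h : S = T)
    (z : Inst V S) : Inst V T :=
  fun i => z ⟨i, h.symm ▸ i.2⟩

/-- Extend an instantiation `u` of `U` with a value `x` for the variable `X`,
yielding an instantiation of `insert X U`. -/
def Inst.consX {ι : Type*} [DecidableEq ι] {V : ι → Type*} {U : Finset ι} (X : ι)
    (x : V X) (u : Inst V U) : Inst V (insert X U) :=
  fun i => if h : (i : ι) = X then _root_.cast (congrArg V h).symm x
           else u ⟨i, (Finset.mem_insert.mp i.2).resolve_left h⟩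

/-- Extend an instantiation `w` of `W \ {X}` with a value `x` for `X ∈ W`,
yielding an instantiation of `W`. -/
def Inst.extendAt {ι : Type*} [DecidableEq ι] {V : ι → Type*} {W : Finset ι} (X : ι)
    (_hX : X ∈ W) (x : V X) (w : Inst V (W \ {X})) : Inst V W :=
  fun i => if h : (i : ι) = X then _root_.cast (congrArg V h).symm x
           else w ⟨i, Finset.mem_sdiff.mpr ⟨i.2, Finset.notMem_singleton.mpr h⟩⟩

/-- The product of a factor over `S` and a factor over `T` is a factor over `S ∪ T`. -/
def Factor.mul {ι : Type*} [DecidableEq ι] {V : ι → Type*} {S T : Finset ι}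
    (f : Inst V S → ℝ) (g : Inst V T → ℝ) : Inst V (S ∪ T) → ℝ :=
  fun z => f (fun i => z ⟨i, Finset.mem_union_left _ i.2⟩) *
           g (fun i => z ⟨i, Finset.mem_union_right _ i.2⟩)

/-- Summing out the variables `Y ⊆ S` from a factor over `S` yields a factor over `S \ Y`. -/
noncomputable def Factor.sumOut {ι : Type*} [DecidableEq ι] {V : ι → Type*}
    [∀ i, Fintype (V i)] {S : Finset ι} (Y : Finset ι) (_hY : Y ⊆ S)
    (f : Inst V S → ℝ) : Inst V (S \ Y) → ℝ :=
  fun z => ∑ y : Inst V Y, f fun i =>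
    if h : (i : ι) ∈ Y then y ⟨i, h⟩ else z ⟨i, Finset.mem_sdiff.mpr ⟨i.2, h⟩⟩

section
variable {ι : Type*} [DecidableEq ι] {V : ι → Type*} [∀ i, Fintype (V i)]
  {M : Type*} [AddCommMonoid M]

lemma Inst.sum_cast {S T : Finset ι} (h : S = T) (f : Inst V T → M) :
    ∑ y, f y = ∑ y : Inst V S, f (Inst.cast h y) := by
  subst h; rfl

lemma Inst.sum_union {P Q : Finset ι} (hd : Disjoint P Q) (f : Inst V (P ∪ Q) → M) :
    ∑ y, f y = ∑ p : Inst V P, ∑ q : Inst V Q, f (Equiv.piFinsetUnion V hd (p, q)) := by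
  rw [← (Equiv.piFinsetUnion V hd).sum_comp, Fintype.sum_prod_type]

end

/-- For factors `g₁` over `W₁` and `g₂` over `W₂` and any set of
variables `Z`, summing out all variables not in `Z` from `g₁ · g₂` decomposes as
`∑_{(W₁∪W₂)\Z} (g₁·g₂) =
   ∑_{((W₁∩(W₂∪Z)) ∪ (W₂∩(W₁∪Z)))\Z} ((∑_{W₁\(W₂∪Z)} g₁) · (∑_{W₂\(W₁∪Z)} g₂))`. -/
theorem sumOut_mul_decompose {ι : Type*} [DecidableEq ι] (V : ι → Type*)
    [∀ i, Fintype (V i)]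
    (W₁ W₂ Z : Finset ι) (g₁ : Inst V W₁ → ℝ) (g₂ : Inst V W₂ → ℝ) :
    ∀ z : Inst V ((W₁ ∪ W₂) \ ((W₁ ∪ W₂) \ Z)),
      Factor.sumOut ((W₁ ∪ W₂) \ Z) Finset.sdiff_subset (Factor.mul g₁ g₂) z
        = Factor.sumOut (((W₁ ∩ (W₂ ∪ Z)) ∪ (W₂ ∩ (W₁ ∪ Z))) \ Z)
            (by
              intro a ha
              simp only [Finset.mem_sdiff, Finset.mem_union, Finset.mem_inter] at ha ⊢
              tauto)
            (Factor.mul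
              (Factor.sumOut (W₁ \ (W₂ ∪ Z)) Finset.sdiff_subset g₁)
              (Factor.sumOut (W₂ \ (W₁ ∪ Z)) Finset.sdiff_subset g₂))
            (Inst.cast
              (by
                ext a
                simp only [Finset.mem_sdiff, Finset.mem_union, Finset.mem_inter]
                tauto) z) := by
  intro z
  have hAB : Disjoint (W₁ \ (W₂ ∪ Z)) (W₂ \ (W₁ ∪ Z)) :=
    Finset.disjoint_left.2 fun a => by simp only [Finset.mem_sdiff, Finset.mem_union]; tauto
  have hCAB : Disjoint (((W₁ ∩ (W₂ ∪ Z)) ∪ (W₂ ∩ (W₁ ∪ Z))) \ Z)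
      ((W₁ \ (W₂ ∪ Z)) ∪ (W₂ \ (W₁ ∪ Z))) :=
    Finset.disjoint_left.2 fun a => by
      simp only [Finset.mem_sdiff, Finset.mem_union, Finset.mem_inter]; tauto
  have hsplit : (((W₁ ∩ (W₂ ∪ Z)) ∪ (W₂ ∩ (W₁ ∪ Z))) \ Z) ∪
      ((W₁ \ (W₂ ∪ Z)) ∪ (W₂ \ (W₁ ∪ Z))) = (W₁ ∪ W₂) \ Z := by
    ext a; simp only [Finset.mem_sdiff, Finset.mem_union, Finset.mem_inter]; tauto
  unfold Factor.sumOut Factor.mul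
  rw [Inst.sum_cast hsplit]
  simp_rw [Inst.sum_union hCAB, Inst.sum_union hAB, Finset.sum_mul_sum]
  refine Fintype.sum_congr _ _ fun c => Fintype.sum_congr _ _ fun a =>
    Fintype.sum_congr _ _ fun b => ?_
  -- A variable of `W₁` lies in exactly one of `Z`, `W₁ \ (W₂ ∪ Z)` and the shared part, and both
  -- sides read its value from `z`, `a` and `c` respectively; symmetrically for `W₂`.
  congr 1 <;> congr 1 <;> funext ⟨i, hi⟩ <;> dsimp only <;> split_ifs <;>
    first
    | (exfalso; simp only [Finset.mem_sdiff, Finset.mem_union, Finset.mem_inter] at *; tauto)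
    | simp_all [Inst.cast, Equiv.piFinsetUnion_left, Equiv.piFinsetUnion_right]
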